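/- Let X ⊂ ℝⁿ be a finite set, let r > 0, and for x ∈ X let N(x) denote its one-hop neighborhood in the r-neighborhood graph G_r(X). Choose 0 < ε < 1 such that for every x ∈ X, ε < min{ (r² − max_{y∈N(x)} ‖x−y‖²) / max_{y∈N(x)} ‖x−y‖², (min_{y∉N(x)} ‖x−y‖² − r²) / min_{y∉N(x)} ‖x−y‖² }. Let A ∈ ℝ^{m×n} be a random matrix with i.i.d. entries A_{ij} ~ N(0, 1/m). Then the map ψ: x ↦ Ax is a graph isomorphism between G_r(X) and G_r(AX), where AX = {Ax : x ∈ X}, with probability at least 1 − |X|(|X|−1)·exp((m/4)(ε³ − ε²)). -/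

import Mathlib

open MeasureTheory ProbabilityTheory

/-- The Euclidean (`L²`) norm of a vector in `ℝ^k`. -/
noncomputable def euclNorm {k : ℕ} (x : Fin k → ℝ) : ℝ := Real.sqrt (∑ i, x i ^ 2)

/-- The Euclidean distance between two vectors in `ℝ^k`. -/
noncomputable def distE {k : ℕ} (a b : Fin k → ℝ) : ℝ := euclNorm (a - b)

/-- Matrix-vector multiplication, viewing a matrix as a function of its rows. -/
def matVec {m n : ℕ} (A : Fin m → Fin n → ℝ) (x : Fin n → ℝ) : Fin m → ℝ :=
  fun i => ∑ j, A i j * x j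

/-- The law of a random `m × n` matrix with i.i.d. centered Gaussian entries of variance `v`. -/
noncomputable def gaussMat (m n : ℕ) (v : NNReal) : Measure (Fin m → Fin n → ℝ) :=
  Measure.pi fun _ : Fin m => Measure.pi fun _ : Fin n => gaussianReal 0 v

/-- Adjacency in the `r`-neighborhood graph `G_r(X)` (w.r.t. the distance `d`):
distinct points of `X` at distance `< r`. -/
def RAdj {V : Type*} (d : V → V → ℝ) (X : Finset V) (r : ℝ) (x y : V) : Prop :=
  x ≠ y ∧ x ∈ X ∧ y ∈ X ∧ d x y < r

/-- `max_{y ∈ N(x)} g x y`, where `N(x)` is the one-hop neighborhood of `x` in `G_r(X)`. -/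
noncomputable def maxNbrVal {V : Type*} (d : V → V → ℝ) (X : Finset V) (r : ℝ)
    (g : V → V → ℝ) (x : V) : ℝ :=
  sSup {s : ℝ | ∃ y, RAdj d X r x y ∧ s = g x y}

/-- `min_{y ∈ X, y ∉ N(x), y ≠ x} g x y`, where `N(x)` is the one-hop neighborhood of `x`
in `G_r(X)`. -/
noncomputable def minNonNbrVal {V : Type*} (d : V → V → ℝ) (X : Finset V) (r : ℝ)
    (g : V → V → ℝ) (x : V) : ℝ :=
  sInf {s : ℝ | ∃ y ∈ X, y ≠ x ∧ ¬ RAdj d X r x y ∧ s = g x y}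

/-- `ψ` is a graph isomorphism between `G_r(X)` and `G_r(ψ(X))`: it is a bijection of `X`
onto its image preserving and reflecting `r`-neighborhood adjacency. -/
def IsRIso {V W : Type*} [DecidableEq W] (dV : V → V → ℝ) (dW : W → W → ℝ)
    (X : Finset V) (r : ℝ) (ψ : V → W) : Prop :=
  Set.InjOn ψ X ∧
    ∀ x ∈ X, ∀ y ∈ X, (RAdj dV X r x y ↔ RAdj dW (X.image ψ) r (ψ x) (ψ y))

open scoped NNReal ENNReal
open Real

/-!
For a fixed `u ≠ 0`, the squared length `‖A u‖²` of a Gaussian image is a sum of `m` independent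
squares of `N(0, ‖u‖² / m)` variables, so its moment generating function is
`(1 - 2 t ‖u‖² / m) ^ (-m/2)`. Chernoff's bound at `t = m δ / (2 ‖u‖² (1 + δ))` with `δ = ±ε`
bounds each of the tails `‖A u‖² ≥ (1 + ε) ‖u‖²` and `‖A u‖² ≤ (1 - ε) ‖u‖²` by
`((1 ± ε) e^(∓ε)) ^ (m/2)`, and `(1 + δ) e^(-δ) ≤ exp ((|δ|³ - δ²) / 2)` turns this into
`exp (m (ε³ - ε²) / 4)`. There are `|X| (|X| - 1)` such tails for the pairs of distinct points of
`X`, so outside probability `|X| (|X| - 1) exp (m (ε³ - ε²) / 4)` the map `x ↦ A x` multiplies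
every squared distance in `X` by a factor in `(1 - ε, 1 + ε)`; the gap condition on `ε` then keeps
neighbors at distance `< r` and non-neighbors at distance `≥ r`.
-/

section GaussianSquare

variable {t : ℝ} {w : ℝ≥0}

lemma gaussianPDFReal_mul_exp_mul_sq (hw : w ≠ 0) (y : ℝ) :
    gaussianPDFReal 0 w y * exp (t * y ^ 2)
      = (√(2 * π * w))⁻¹ * exp (-((1 - 2 * t * w) / (2 * w)) * y ^ 2) := by
  have hw' : (w : ℝ) ≠ 0 := by exact_mod_cast hw
  rw [gaussianPDFReal, mul_assoc, ← exp_add]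
  congr 2
  field_simp
  ring

lemma integrable_exp_mul_sq_gaussianReal (h : 2 * t * w < 1) :
    Integrable (fun y => exp (t * y ^ 2)) (gaussianReal 0 w) := by
  rcases eq_or_ne w 0 with rfl | hw
  · rw [gaussianReal_zero_var]
    exact integrable_dirac enorm_lt_top
  have hb : 0 < (1 - 2 * t * w) / (2 * w) := div_pos (by linarith) (by positivity)
  rw [gaussianReal_of_var_ne_zero 0 hw, integrable_withDensity_iff_integrable_smul'
    (measurable_gaussianPDF 0 w) (ae_of_all _ fun _ => gaussianPDF_lt_top)]
  simp only [toReal_gaussianPDF, smul_eq_mul, gaussianPDFReal_mul_exp_mul_sq hw]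
  exact (integrable_exp_neg_mul_sq hb).const_mul _

lemma integral_exp_mul_sq_gaussianReal (h : 2 * t * w < 1) :
    ∫ y, exp (t * y ^ 2) ∂gaussianReal 0 w = (√(1 - 2 * t * w))⁻¹ := by
  rcases eq_or_ne w 0 with rfl | hw
  · simp [gaussianReal_zero_var]
  have hw' : (0 : ℝ) < w := by positivity
  rw [integral_gaussianReal_eq_integral_smul hw]
  simp only [smul_eq_mul, gaussianPDFReal_mul_exp_mul_sq hw]
  rw [integral_const_mul, integral_gaussian, ← sqrt_inv, ← sqrt_inv, ← sqrt_mul (by positivity)]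
  congr 1
  field_simp

end GaussianSquare

lemma map_pi_gaussianReal_sum_mul {ι : Type*} [Fintype ι] {v w : ℝ≥0} (c : ι → ℝ)
    (hw : (w : ℝ) = v * ∑ j, c j ^ 2) :
    (Measure.pi fun _ : ι => gaussianReal 0 v).map (fun x => ∑ j, x j * c j)
      = gaussianReal 0 w := by
  have hcomp : (fun x : ι → ℝ => ∑ j, x j * c j)
      = (fun p : ι → ℝ => ∑ j, p j) ∘ (fun x j => x j * c j) := rfl
  rw [hcomp, ← Measure.map_map (by fun_prop) (by fun_prop),
    Measure.pi_map_pi (f := fun j y => y * c j) (fun _ => by fun_prop)]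
  refine Measure.ext_of_charFun ?_
  ext t
  simp only [charFun_map_sum_pi_eq_prod, Finset.prod_apply, gaussianReal_map_mul_const,
    charFun_gaussianReal, ← Complex.exp_sum]
  congr 1
  rw [hw]
  push_cast
  simp only [mul_zero, zero_mul, zero_sub, Finset.sum_neg_distrib, neg_inj, Finset.mul_sum,
    Finset.sum_mul, Finset.sum_div]
  exact Finset.sum_congr rfl fun j _ => by ring

instance isProbabilityMeasure_gaussMat {m n : ℕ} {v : ℝ≥0} :
    IsProbabilityMeasure (gaussMat m n v) := by
  rw [gaussMat]
  infer_instance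

section GaussianMatrix

variable {m n : ℕ} {v : ℝ≥0} {t : ℝ} (u : Fin n → ℝ)

lemma integrable_exp_mul_sq_sum_mul_pi_gaussianReal (h : 2 * t * (v * ∑ j, u j ^ 2) < 1) :
    Integrable (fun a : Fin n → ℝ => exp (t * (∑ j, a j * u j) ^ 2))
      (Measure.pi fun _ => gaussianReal 0 v) := by
  set w : ℝ≥0 := ⟨v * ∑ j, u j ^ 2, by positivity⟩
  have hmap := map_pi_gaussianReal_sum_mul (w := w) u rfl
  have := integrable_exp_mul_sq_gaussianReal (w := w) h
  rw [← hmap] at this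
  exact this.comp_measurable (by fun_prop)

lemma integral_exp_mul_sq_sum_mul_pi_gaussianReal (h : 2 * t * (v * ∑ j, u j ^ 2) < 1) :
    ∫ a : Fin n → ℝ, exp (t * (∑ j, a j * u j) ^ 2) ∂(Measure.pi fun _ => gaussianReal 0 v)
      = (√(1 - 2 * t * (v * ∑ j, u j ^ 2)))⁻¹ := by
  set w : ℝ≥0 := ⟨v * ∑ j, u j ^ 2, by positivity⟩
  have hmap := map_pi_gaussianReal_sum_mul (w := w) u rfl
  have hchange := integral_map (μ := Measure.pi fun _ : Fin n => gaussianReal 0 v)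
    (φ := fun a => ∑ j, a j * u j) (by fun_prop : Measurable _).aemeasurable
    (f := fun y => exp (t * y ^ 2)) (by fun_prop)
  rw [hmap, integral_exp_mul_sq_gaussianReal (w := w) h] at hchange
  exact hchange.symm

lemma exp_mul_sum_sq_matVec (A : Fin m → Fin n → ℝ) :
    exp (t * ∑ i, matVec A u i ^ 2) = ∏ i, exp (t * (∑ j, A i j * u j) ^ 2) := by
  rw [Finset.mul_sum, exp_sum]
  rfl

lemma integrable_exp_mul_sum_sq_matVec (h : 2 * t * (v * ∑ j, u j ^ 2) < 1) :
    Integrable (fun A => exp (t * ∑ i, matVec A u i ^ 2)) (gaussMat m n v) := by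
  have hrow := integrable_exp_mul_sq_sum_mul_pi_gaussianReal u h
  have := Integrable.fintype_prod (ι := Fin m) (𝕜 := ℝ) (E := Fin n → ℝ)
    (μ := fun _ => Measure.pi fun _ => gaussianReal 0 v)
    (f := fun _ a => exp (t * (∑ j, a j * u j) ^ 2)) fun _ => hrow
  simp only [exp_mul_sum_sq_matVec]
  exact this

lemma mgf_sum_sq_matVec (h : 2 * t * (v * ∑ j, u j ^ 2) < 1) :
    mgf (fun A => ∑ i, matVec A u i ^ 2) (gaussMat m n v) t
      = (√(1 - 2 * t * (v * ∑ j, u j ^ 2)))⁻¹ ^ m := by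
  simp only [mgf, exp_mul_sum_sq_matVec]
  rw [gaussMat, integral_fintype_prod_eq_pow (fun a : Fin n → ℝ => exp (t * (∑ j, a j * u j) ^ 2)),
    integral_exp_mul_sq_sum_mul_pi_gaussianReal u h, Fintype.card_fin]

end GaussianMatrix

lemma one_add_mul_exp_neg_le {δ : ℝ} (h : |δ| ≤ 1) :
    (1 + δ) * exp (-δ) ≤ exp ((|δ| ^ 3 - δ ^ 2) / 2) := by
  have hseries := Real.exp_bound (x := -δ) (by rwa [abs_neg]) (n := 4) (by norm_num)
  norm_num [Finset.sum_range_succ, Nat.factorial, abs_neg] at hseries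
  have hexp : exp (-δ) ≤ 1 - δ + δ ^ 2 / 2 - δ ^ 3 / 6 + 5 / 96 * δ ^ 4 := by
    have := (abs_le.1 hseries).2
    rw [pow_abs, abs_of_nonneg (by positivity)] at this
    linarith
  have hδ := abs_le.1 h
  calc (1 + δ) * exp (-δ)
      ≤ (1 + δ) * (1 - δ + δ ^ 2 / 2 - δ ^ 3 / 6 + 5 / 96 * δ ^ 4) :=
        mul_le_mul_of_nonneg_left hexp (by linarith)
    _ ≤ (|δ| ^ 3 - δ ^ 2) / 2 + 1 := by
        rcases abs_cases δ with ⟨hab, hs⟩ | ⟨hab, hs⟩ <;> rw [hab]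
        · nlinarith [pow_nonneg hs 3, mul_nonneg (pow_nonneg hs 4) (sub_nonneg.2 hδ.2)]
        · have ha : 0 ≤ -δ := by linarith
          nlinarith [pow_nonneg ha 3, pow_nonneg ha 4, pow_nonneg ha 5]
    _ ≤ exp ((|δ| ^ 3 - δ ^ 2) / 2) := add_one_le_exp _

section ChiSquaredTail

variable {Ω : Type*} [MeasurableSpace Ω] {μ : Measure Ω} {Z : Ω → ℝ} {m : ℕ} {w δ ε : ℝ}

lemma exp_neg_mul_mul_mgf_le (hw : 0 < w) (hδ : -1 < δ) (hδ' : δ ≤ 1)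
    (hmgf : ∀ t, 2 * t * w < 1 → mgf Z μ t = (√(1 - 2 * t * w))⁻¹ ^ m) :
    exp (-(δ / (2 * w * (1 + δ))) * ((1 + δ) * (m * w))) * mgf Z μ (δ / (2 * w * (1 + δ)))
      ≤ exp (m / 4 * (|δ| ^ 3 - δ ^ 2)) := by
  have hδ0 : 0 < 1 + δ := by linarith
  have htw : 2 * (δ / (2 * w * (1 + δ))) * w = δ / (1 + δ) := by field_simp
  have hexp : exp (-(δ / (2 * w * (1 + δ))) * ((1 + δ) * (m * w))) = √(exp (-δ)) ^ m := by
    rw [← exp_half, ← exp_nat_mul]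
    congr 1
    field_simp
  have hmgfδ : mgf Z μ (δ / (2 * w * (1 + δ))) = √(1 + δ) ^ m := by
    rw [hmgf _ (by rw [htw, div_lt_one hδ0]; linarith), htw,
      show 1 - δ / (1 + δ) = (1 + δ)⁻¹ by field_simp; ring, sqrt_inv, inv_inv]
  have hbase : √((1 + δ) * exp (-δ)) ≤ exp ((|δ| ^ 3 - δ ^ 2) / 4) := by
    rw [show (|δ| ^ 3 - δ ^ 2) / 4 = (|δ| ^ 3 - δ ^ 2) / 2 / 2 by ring, exp_half]
    exact sqrt_le_sqrt (one_add_mul_exp_neg_le (abs_le.2 ⟨hδ.le, hδ'⟩))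
  calc exp (-(δ / (2 * w * (1 + δ))) * ((1 + δ) * (m * w))) * mgf Z μ (δ / (2 * w * (1 + δ)))
      = √((1 + δ) * exp (-δ)) ^ m := by
        rw [hexp, hmgfδ, ← mul_pow, sqrt_mul hδ0.le, mul_comm]
    _ ≤ exp ((|δ| ^ 3 - δ ^ 2) / 4) ^ m := pow_le_pow_left₀ (sqrt_nonneg _) hbase m
    _ = exp (m / 4 * (|δ| ^ 3 - δ ^ 2)) := by rw [← exp_nat_mul]; ring_nf

variable [IsFiniteMeasure μ]

lemma measureReal_ge_le_of_mgf_eq (hw : 0 < w) (hε0 : 0 ≤ ε) (hε1 : ε ≤ 1)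
    (hint : ∀ t, 2 * t * w < 1 → Integrable (fun ω => exp (t * Z ω)) μ)
    (hmgf : ∀ t, 2 * t * w < 1 → mgf Z μ t = (√(1 - 2 * t * w))⁻¹ ^ m) :
    μ.real {ω | (1 + ε) * (m * w) ≤ Z ω} ≤ exp (m / 4 * (ε ^ 3 - ε ^ 2)) := by
  have ht : 2 * (ε / (2 * w * (1 + ε))) * w < 1 := by
    rw [show 2 * (ε / (2 * w * (1 + ε))) * w = ε / (1 + ε) by field_simp,
      div_lt_one (by linarith)]
    linarith
  refine (measure_ge_le_exp_mul_mgf _ (by positivity) (hint _ ht)).trans ?_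
  simpa only [abs_of_nonneg hε0] using exp_neg_mul_mul_mgf_le hw (by linarith) hε1 hmgf

lemma measureReal_le_le_of_mgf_eq (hw : 0 < w) (hε0 : 0 ≤ ε) (hε1 : ε < 1)
    (hint : ∀ t, 2 * t * w < 1 → Integrable (fun ω => exp (t * Z ω)) μ)
    (hmgf : ∀ t, 2 * t * w < 1 → mgf Z μ t = (√(1 - 2 * t * w))⁻¹ ^ m) :
    μ.real {ω | Z ω ≤ (1 - ε) * (m * w)} ≤ exp (m / 4 * (ε ^ 3 - ε ^ 2)) := by
  have ht0 : -ε / (2 * w * (1 + -ε)) ≤ 0 :=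
    div_nonpos_of_nonpos_of_nonneg (by linarith) (by nlinarith)
  have ht : 2 * (-ε / (2 * w * (1 + -ε))) * w < 1 := by nlinarith
  refine (measure_le_le_exp_mul_mgf _ ht0 (hint _ ht)).trans ?_
  simpa only [abs_neg, abs_of_nonneg hε0, neg_sq, sub_eq_add_neg] using
    exp_neg_mul_mul_mgf_le (δ := -ε) hw (by linarith) (by linarith) hmgf

end ChiSquaredTail

section EuclideanDistance

variable {n m : ℕ}

lemma distE_nonneg (a b : Fin n → ℝ) : 0 ≤ distE a b := sqrt_nonneg _

lemma distE_self (a : Fin n → ℝ) : distE a a = 0 := by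
  simp [distE, euclNorm]

lemma distE_comm (a b : Fin n → ℝ) : distE a b = distE b a := by
  rw [distE, distE, ← neg_sub, euclNorm, euclNorm]
  simp only [Pi.neg_apply, neg_sq]

lemma sq_distE (a b : Fin n → ℝ) : distE a b ^ 2 = ∑ j, (a - b) j ^ 2 :=
  sq_sqrt (Finset.sum_nonneg fun _ _ => sq_nonneg _)

lemma sq_distE_pos {a b : Fin n → ℝ} (h : a ≠ b) : 0 < distE a b ^ 2 := by
  obtain ⟨j, hj⟩ := Function.ne_iff.1 h
  rw [sq_distE]
  exact Finset.sum_pos' (fun _ _ => sq_nonneg _)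
    ⟨j, Finset.mem_univ j, sq_pos_of_ne_zero (sub_ne_zero.2 hj)⟩

lemma sq_distE_matVec (A : Fin m → Fin n → ℝ) (x y : Fin n → ℝ) :
    distE (matVec A x) (matVec A y) ^ 2 = ∑ i, matVec A (x - y) i ^ 2 := by
  simp only [sq_distE, matVec, Pi.sub_apply, mul_sub, Finset.sum_sub_distrib]

lemma sq_distE_eq_natCast_mul (hm : m ≠ 0) (x y : Fin n → ℝ) :
    distE x y ^ 2 = m * (((m : ℝ≥0)⁻¹ : ℝ≥0) * ∑ j, (x - y) j ^ 2) := by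
  rw [sq_distE]
  push_cast
  field_simp

end EuclideanDistance

def IsSqNearIsometryOn {n k : ℕ} (ε : ℝ) (X : Finset (Fin n → ℝ)) (ψ : (Fin n → ℝ) → Fin k → ℝ) :
    Prop :=
  ∀ x ∈ X, ∀ y ∈ X, x ≠ y →
    (1 - ε) * distE x y ^ 2 < distE (ψ x) (ψ y) ^ 2 ∧
      distE (ψ x) (ψ y) ^ 2 < (1 + ε) * distE x y ^ 2

section RandomProjection

variable {m n : ℕ} {x y : Fin n → ℝ} {ε : ℝ}

lemma gaussMat_sq_distE_matVec_ge_le (hxy : x ≠ y) (hε0 : 0 ≤ ε) (hε1 : ε ≤ 1) :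
    gaussMat m n (m : ℝ≥0)⁻¹
        {A | (1 + ε) * distE x y ^ 2 ≤ distE (matVec A x) (matVec A y) ^ 2}
      ≤ ENNReal.ofReal (exp (m / 4 * (ε ^ 3 - ε ^ 2))) := by
  rcases Nat.eq_zero_or_pos m with rfl | hm
  · simpa using prob_le_one
  rw [ENNReal.le_ofReal_iff_toReal_le (measure_ne_top _ _) (exp_pos _).le]
  simp only [sq_distE_matVec]
  rw [sq_distE_eq_natCast_mul hm.ne' x y]
  exact measureReal_ge_le_of_mgf_eq (mul_pos (by positivity) (sq_distE x y ▸ sq_distE_pos hxy))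
    hε0 hε1 (fun t => integrable_exp_mul_sum_sq_matVec (x - y))
    (fun t => mgf_sum_sq_matVec (x - y))

lemma gaussMat_sq_distE_matVec_le_le (hxy : x ≠ y) (hε0 : 0 ≤ ε) (hε1 : ε < 1) :
    gaussMat m n (m : ℝ≥0)⁻¹
        {A | distE (matVec A x) (matVec A y) ^ 2 ≤ (1 - ε) * distE x y ^ 2}
      ≤ ENNReal.ofReal (exp (m / 4 * (ε ^ 3 - ε ^ 2))) := by
  rcases Nat.eq_zero_or_pos m with rfl | hm
  · simpa using prob_le_one
  rw [ENNReal.le_ofReal_iff_toReal_le (measure_ne_top _ _) (exp_pos _).le]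
  simp only [sq_distE_matVec]
  rw [sq_distE_eq_natCast_mul hm.ne' x y]
  exact measureReal_le_le_of_mgf_eq (mul_pos (by positivity) (sq_distE x y ▸ sq_distE_pos hxy))
    hε0 hε1 (fun t => integrable_exp_mul_sum_sq_matVec (x - y))
    (fun t => mgf_sum_sq_matVec (x - y))

lemma cast_card_offDiag {α : Type*} [DecidableEq α] (X : Finset α) :
    (X.offDiag.card : ℝ) = X.card * (X.card - 1) := by
  rw [Finset.offDiag_card, Nat.cast_sub (Nat.le_mul_self _), Nat.cast_mul]
  ring

theorem gaussMat_not_isSqNearIsometryOn_le (X : Finset (Fin n → ℝ)) (hε0 : 0 < ε)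
    (hε1 : ε < 1) :
    gaussMat m n (m : ℝ≥0)⁻¹ {A | IsSqNearIsometryOn ε X (matVec A)}ᶜ
      ≤ ENNReal.ofReal (X.card * (X.card - 1) * exp (m / 4 * (ε ^ 3 - ε ^ 2))) := by
  classical
  set β := exp (m / 4 * (ε ^ 3 - ε ^ 2))
  -- `WellOrderingRel` orients each pair of distinct points: `(x, y)` carries the upper tail of
  -- `x - y` exactly when `(y, x)` carries the lower one.
  let E : (Fin n → ℝ) × (Fin n → ℝ) → Set (Fin m → Fin n → ℝ) := fun p =>
    if WellOrderingRel p.1 p.2 then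
      {A | (1 + ε) * distE p.1 p.2 ^ 2 ≤ distE (matVec A p.1) (matVec A p.2) ^ 2}
    else {A | distE (matVec A p.1) (matVec A p.2) ^ 2 ≤ (1 - ε) * distE p.1 p.2 ^ 2}
  have hE : ∀ p ∈ X.offDiag, gaussMat m n (m : ℝ≥0)⁻¹ (E p) ≤ ENNReal.ofReal β := by
    rintro ⟨x, y⟩ hp
    have hxy := (Finset.mem_offDiag.1 hp).2.2
    by_cases h : WellOrderingRel x y
    · simpa only [E, if_pos h] using gaussMat_sq_distE_matVec_ge_le hxy hε0.le hε1.le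
    · simpa only [E, if_neg h] using gaussMat_sq_distE_matVec_le_le hxy hε0.le hε1
  have hcover : {A | IsSqNearIsometryOn ε X (matVec A)}ᶜ ⊆ ⋃ p ∈ X.offDiag, E p := by
    intro A hbad
    obtain ⟨x, hx, y, hy, hxy, hA⟩ : ∃ x ∈ X, ∃ y ∈ X, x ≠ y ∧ ¬((1 - ε) * distE x y ^ 2 <
        distE (matVec A x) (matVec A y) ^ 2 ∧
          distE (matVec A x) (matVec A y) ^ 2 < (1 + ε) * distE x y ^ 2) := by
      simpa [IsSqNearIsometryOn] using hbad
    by_contra hnone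
    simp only [Set.mem_iUnion, not_exists] at hnone
    have hxy' := hnone (x, y) (Finset.mem_offDiag.2 ⟨hx, hy, hxy⟩)
    have hyx' := hnone (y, x) (Finset.mem_offDiag.2 ⟨hy, hx, hxy.symm⟩)
    apply hA
    rcases trichotomous_of WellOrderingRel x y with h | rfl | h
    · simp only [E, if_pos h, if_neg (asymm h), Set.mem_ofPred_eq, not_le, distE_comm y x,
        distE_comm (matVec A y) (matVec A x)] at hxy' hyx'
      exact ⟨hyx', hxy'⟩
    · exact absurd rfl hxy
    · simp only [E, if_pos h, if_neg (asymm h), Set.mem_ofPred_eq, not_le, distE_comm y x,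
        distE_comm (matVec A y) (matVec A x)] at hxy' hyx'
      exact ⟨hxy', hyx'⟩
  calc gaussMat m n (m : ℝ≥0)⁻¹ {A | IsSqNearIsometryOn ε X (matVec A)}ᶜ
      ≤ gaussMat m n (m : ℝ≥0)⁻¹ (⋃ p ∈ X.offDiag, E p) := measure_mono hcover
    _ ≤ ∑ p ∈ X.offDiag, gaussMat m n (m : ℝ≥0)⁻¹ (E p) := measure_biUnion_finset_le _ _
    _ ≤ ∑ p ∈ X.offDiag, ENNReal.ofReal β := Finset.sum_le_sum hE
    _ = ENNReal.ofReal (X.card * (X.card - 1) * β) := by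
        rw [Finset.sum_const, nsmul_eq_mul, ← ENNReal.ofReal_natCast,
          ← ENNReal.ofReal_mul (Nat.cast_nonneg _), cast_card_offDiag]

end RandomProjection

section NeighborhoodGraph

variable {V : Type*} {d g : V → V → ℝ} {X : Finset V} {r : ℝ} {x y : V}

lemma le_maxNbrVal (h : RAdj d X r x y) : g x y ≤ maxNbrVal d X r g x := by
  refine le_csSup ((X.finite_toSet.image (g x)).subset ?_).bddAbove ⟨y, h, rfl⟩
  rintro _ ⟨z, hz, rfl⟩
  exact ⟨z, hz.2.2.1, rfl⟩

lemma minNonNbrVal_le (hy : y ∈ X) (hyx : y ≠ x) (h : ¬ RAdj d X r x y) :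
    minNonNbrVal d X r g x ≤ g x y := by
  refine csInf_le ((X.finite_toSet.image (g x)).subset ?_).bddBelow ⟨y, hy, hyx, h, rfl⟩
  rintro _ ⟨z, hz, -, -, rfl⟩
  exact ⟨z, hz, rfl⟩

lemma minNonNbrVal_nonneg (hg : ∀ y, 0 ≤ g x y) : 0 ≤ minNonNbrVal d X r g x :=
  Real.sInf_nonneg (by rintro _ ⟨y, -, -, -, rfl⟩; exact hg y)

end NeighborhoodGraph

lemma one_add_mul_lt_of_lt_div {ε a b : ℝ} (hε : 0 < ε) (hb : 0 ≤ b) (h : ε < (a - b) / b) :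
    (1 + ε) * b < a := by
  rcases hb.eq_or_lt with rfl | hb
  · rw [div_zero] at h
    exact absurd h hε.not_gt
  rw [lt_div_iff₀ hb] at h
  linarith

lemma lt_one_sub_mul_of_lt_div {ε a b : ℝ} (hε : 0 < ε) (hb : 0 ≤ b) (h : ε < (b - a) / b) :
    a < (1 - ε) * b := by
  rcases hb.eq_or_lt with rfl | hb
  · rw [div_zero] at h
    exact absurd h hε.not_gt
  rw [lt_div_iff₀ hb] at h
  linarith

theorem IsSqNearIsometryOn.isRIso {n k : ℕ} {X : Finset (Fin n → ℝ)} {r ε : ℝ}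
    {ψ : (Fin n → ℝ) → Fin k → ℝ} (hψ : IsSqNearIsometryOn ε X ψ) (hε0 : 0 < ε) (hε1 : ε < 1)
    (hgap : ∀ x ∈ X,
      ε < min
        ((r ^ 2 - maxNbrVal distE X r (fun a b => distE a b ^ 2) x) /
          maxNbrVal distE X r (fun a b => distE a b ^ 2) x)
        ((minNonNbrVal distE X r (fun a b => distE a b ^ 2) x - r ^ 2) /
          minNonNbrVal distE X r (fun a b => distE a b ^ 2) x)) :
    IsRIso distE distE X r ψ := by
  have hinj : Set.InjOn ψ X := by
    intro x hx y hy hxy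
    by_contra hne
    have hlow := (hψ x hx y hy hne).1
    rw [hxy, distE_self] at hlow
    nlinarith [sq_nonneg (distE x y)]
  refine ⟨hinj, fun x hx y hy => ⟨?_, ?_⟩⟩
  · rintro ⟨hne, -, -, hlt⟩
    have hd := le_maxNbrVal (g := fun a b => distE a b ^ 2) ⟨hne, hx, hy, hlt⟩
    have hmax := one_add_mul_lt_of_lt_div hε0 ((sq_nonneg _).trans hd) (lt_min_iff.1 (hgap x hx)).1
    have hψr : distE (ψ x) (ψ y) ^ 2 < r ^ 2 := by nlinarith [(hψ x hx y hy hne).2]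
    exact ⟨hinj.ne hx hy hne, Finset.mem_image_of_mem ψ hx, Finset.mem_image_of_mem ψ hy,
      lt_of_pow_lt_pow_left₀ 2 ((distE_nonneg x y).trans hlt.le) hψr⟩
  · rintro ⟨hψne, -, -, hψlt⟩
    have hne : x ≠ y := fun h => hψne (congrArg ψ h)
    refine ⟨hne, hx, hy, ?_⟩
    by_contra hge
    have hd := minNonNbrVal_le (g := fun a b => distE a b ^ 2) hy hne.symm (fun h => hge h.2.2.2)
    have hmin := lt_one_sub_mul_of_lt_div hε0 (minNonNbrVal_nonneg fun _ => sq_nonneg _)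
      (lt_min_iff.1 (hgap x hx)).2
    have hrψ : r ^ 2 < distE (ψ x) (ψ y) ^ 2 := by nlinarith [(hψ x hx y hy hne).1]
    have := pow_lt_pow_left₀ hψlt (distE_nonneg _ _) two_ne_zero
    linarith

lemma ofReal_one_sub_le_of_measure_compl_le {α : Type*} [MeasurableSpace α] {μ : Measure α}
    [IsProbabilityMeasure μ] {s : Set α} {b : ℝ} (hb : 0 ≤ b) (h : μ sᶜ ≤ ENNReal.ofReal b) :
    ENNReal.ofReal (1 - b) ≤ μ s := by
  have hcover : 1 ≤ μ s + μ sᶜ := by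
    rw [← measure_univ (μ := μ), ← Set.union_compl_self s]
    exact measure_union_le s sᶜ
  rw [ENNReal.ofReal_sub _ hb, ENNReal.ofReal_one, tsub_le_iff_right]
  exact hcover.trans (add_le_add_right h _)

theorem stmt_4_general (n m : ℕ) (X : Finset (Fin n → ℝ)) (r : ℝ)
    (ε : ℝ) (hε0 : 0 < ε) (hε1 : ε < 1)
    (hgap : ∀ x ∈ X,
      ε < min
        ((r ^ 2 - maxNbrVal distE X r (fun a b => distE a b ^ 2) x) /
          maxNbrVal distE X r (fun a b => distE a b ^ 2) x)
        ((minNonNbrVal distE X r (fun a b => distE a b ^ 2) x - r ^ 2) /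
          minNonNbrVal distE X r (fun a b => distE a b ^ 2) x)) :
    ENNReal.ofReal
        (1 - (X.card : ℝ) * ((X.card : ℝ) - 1) * Real.exp ((m : ℝ) / 4 * (ε ^ 3 - ε ^ 2))) ≤
      gaussMat m n (m : NNReal)⁻¹
        {A | IsRIso distE distE X r (matVec A)} := by
  classical
  have hpairs : 0 ≤ (X.card : ℝ) * ((X.card : ℝ) - 1) := by
    rw [← cast_card_offDiag]
    positivity
  refine (ofReal_one_sub_le_of_measure_compl_le (mul_nonneg hpairs (exp_pos _).le)
    (gaussMat_not_isSqNearIsometryOn_le X hε0 hε1)).trans (measure_mono ?_)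
  exact fun A hA => IsSqNearIsometryOn.isRIso hA hε0 hε1 hgap

/-- with high probability, a random Gaussian matrix induces a graph isomorphism
of `r`-neighborhood graphs. -/
theorem stmt_4 (n m : ℕ) (X : Finset (Fin n → ℝ)) (r : ℝ) (hr : 0 < r)
    (ε : ℝ) (hε0 : 0 < ε) (hε1 : ε < 1)
    (hgap : ∀ x ∈ X,
      ε < min
        ((r ^ 2 - maxNbrVal distE X r (fun a b => distE a b ^ 2) x) /
          maxNbrVal distE X r (fun a b => distE a b ^ 2) x)
        ((minNonNbrVal distE X r (fun a b => distE a b ^ 2) x - r ^ 2) /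
          minNonNbrVal distE X r (fun a b => distE a b ^ 2) x)) :
    ENNReal.ofReal
        (1 - (X.card : ℝ) * ((X.card : ℝ) - 1) * Real.exp ((m : ℝ) / 4 * (ε ^ 3 - ε ^ 2))) ≤
      gaussMat m n (m : NNReal)⁻¹
        {A | IsRIso distE distE X r (matVec A)} :=
  stmt_4_general n m X r ε hε0 hε1 hgap
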